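/- arXiv:2203.12549 — 2 statements merged into one kernel-verified Lean document; each statement's English description precedes it below -/
import Mathlib

section
/- If D is a double circuit of a matroid M, then there exists a partition (D₁, …, D_k) of D such that the circuits of M contained in D are exactly the sets D \ D_i for i ∈ {1, …, k}. -/
/-!
Write `n(X) = |X| - r(X)` for the nullity. Submodularity gives `n(C₁ ∪ C₂) ≥ 2` for distinct
circuits `C₁, C₂`, and nullity is monotone. A double circuit has `n(D) = 2` and `n(D - d) = 1`
for each `d ∈ D`. So every `D - d` contains a circuit, but no two distinct ones; that is, every
element of `D` lies outside some circuit contained in `D`, and outside at most one. Hence the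
complements in `D` of the circuits contained in `D` partition `D`, and they are nonempty because
`D` itself is not a circuit.
-/

open Set

namespace Paper

/-! ### Multigraphs, walks, cycles -/

/-- A multigraph on vertex type `V` with edge type `E`: each edge has an
unordered pair of endpoints (possibly equal, giving a loop). -/
structure Multigraph (V : Type*) (E : Type*) where
  inc : E → Sym2 V

namespace Multigraph

variable {V E : Type*}

/-- `G.IsWalk I u es vs`: starting at vertex `u` and using only edges in `I`,
the edges `es` form a walk that successively visits the vertices `vs`. -/
inductive IsWalk (G : Multigraph V E) (I : Set E) : V → List E → List V → Prop
  | nil (v : V) : IsWalk G I v [] []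
  | cons {u v : V} {e : E} {es : List E} {vs : List V} :
      e ∈ I → G.inc e = s(u, v) → IsWalk G I v es vs → IsWalk G I u (e :: es) (v :: vs)

/-- A walk from `u` to `w` inside the edge set `I`. -/
def IsWalkFrom (G : Multigraph V E) (I : Set E) (u : V) (es : List E) (vs : List V)
    (w : V) : Prop :=
  G.IsWalk I u es vs ∧ (u :: vs).getLast (by simp) = w

/-- `u` and `w` are joined by a walk using edges of `I` (same component of `G[I]`). -/
def Reachable (G : Multigraph V E) (I : Set E) (u w : V) : Prop :=
  ∃ es vs, G.IsWalkFrom I u es vs w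

/-- A cycle based at `v` using edges of `I`: a nonempty closed walk with no repeated
edges and no repeated vertices (except for the base point).  A loop is a cycle of
length `1` and a pair of parallel edges forms a cycle of length `2`. -/
def IsCycle (G : Multigraph V E) (I : Set E) (v : V) (es : List E) (vs : List V) : Prop :=
  G.IsWalkFrom I v es vs v ∧ es ≠ [] ∧ es.Nodup ∧ vs.Nodup

/-- `C` is the edge set of a cycle of the subgraph `G[I]`. -/
def IsCycleIn (G : Multigraph V E) (I : Set E) (C : Set E) : Prop :=
  ∃ v es vs, G.IsCycle I v es vs ∧ C = {e | e ∈ es}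

/-- A path from `u` to `w`: a walk with pairwise distinct vertices. -/
def IsPath (G : Multigraph V E) (I : Set E) (u : V) (es : List E) (vs : List V)
    (w : V) : Prop :=
  G.IsWalkFrom I u es vs w ∧ (u :: vs).Nodup

/-- The vertices covered by an edge set `D`; the vertex set of `G[D]`. -/
def verts (G : Multigraph V E) (D : Set E) : Set V := {v | ∃ e ∈ D, v ∈ G.inc e}

/-- The degree of `v` in the subgraph `G[D]` (loops count twice). -/
noncomputable def degree (G : Multigraph V E) (D : Set E) (v : V) : ℕ :=
  {e ∈ D | v ∈ G.inc e}.ncard + {e ∈ D | G.inc e = s(v, v)}.ncard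

/-- Every connected component of `G[I]` contains at most one cycle:
any two cycles of `G[I]` lying in the same component coincide. -/
def BicircIndep (G : Multigraph V E) (I : Set E) : Prop :=
  ∀ C₁ C₂ : Set E, G.IsCycleIn I C₁ → G.IsCycleIn I C₂ →
    (∃ u w, u ∈ G.verts C₁ ∧ w ∈ G.verts C₂ ∧ G.Reachable I u w) → C₁ = C₂

/-- `M` is the bicircular matroid `B(G)` of the multigraph `G`. -/
def IsBicircularOf (G : Multigraph V E) (M : Matroid E) : Prop :=
  M.E = univ ∧ ∀ I : Set E, M.Indep I ↔ G.BicircIndep I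

end Multigraph

/-! ### Matroid notions -/

variable {α : Type*}

/-- The (extended) rank of a set in a matroid. -/
noncomputable def eRk (M : Matroid α) (X : Set α) : ℕ∞ :=
  ⨆ I ∈ {I | M.Indep I ∧ I ⊆ X}, I.encard

/-- A circuit: a minimal dependent set. -/
def Circuit (M : Matroid α) (C : Set α) : Prop :=
  M.Dep C ∧ ∀ D ⊂ C, ¬ M.Dep D

/-- A double circuit: a finite set `D` with `r(D) = |D| - 2` whose rank does not drop
when any single element is removed. -/
def DoubleCircuit (M : Matroid α) (D : Set α) : Prop :=
  D ⊆ M.E ∧ D.Finite ∧ eRk M D + 2 = D.encard ∧ ∀ d ∈ D, eRk M (D \ {d}) = eRk M D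

/-- `f` is a circuit partition of `D`: a partition of `D` into nonempty parts such that the
circuits of `M` contained in `D` are exactly the complements in `D` of the parts. -/
def CircuitPartition (M : Matroid α) (D : Set α) {k : ℕ} (f : Fin k → Set α) : Prop :=
  (∀ i, (f i).Nonempty) ∧ (∀ i j : Fin k, i ≠ j → Disjoint (f i) (f j)) ∧
    (⋃ i, f i) = D ∧ ∀ C : Set α, (Circuit M C ∧ C ⊆ D) ↔ ∃ i, C = D \ f i

/-- A part of a partition is singular if it has exactly one element. -/
def PositiveDoubleCircuit (M : Matroid α) (D : Set α) : Prop :=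
  DoubleCircuit M D ∧ ∃ (k : ℕ) (f : Fin k → Set α), CircuitPartition M D f ∧
    {i : Fin k | (f i).encard ≠ 1}.ncard < {i : Fin k | (f i).encard = 1}.ncard

/-- A hyperplane (copoint): a maximal proper flat. -/
def Hyperplane (M : Matroid α) (H : Set α) : Prop :=
  M.IsFlat H ∧ H ≠ M.E ∧ ∀ F, M.IsFlat F → H ⊂ F → F = M.E

/-- A coline: a flat of rank `r(M) - 2`. -/
def Coline (M : Matroid α) (L : Set α) : Prop :=
  M.IsFlat L ∧ eRk M L + 2 = eRk M M.E

/-- A positive coline: more simple copoints on `L` than multiple copoints on `L`. -/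
def PositiveColine (M : Matroid α) (L : Set α) : Prop :=
  Coline M L ∧
    {H | Hyperplane M H ∧ L ⊆ H ∧ (H \ L).encard ≠ 1}.ncard <
      {H | Hyperplane M H ∧ L ⊆ H ∧ (H \ L).encard = 1}.ncard

/-- Deletion of a set of elements. -/
def delete (M : Matroid α) (D : Set α) : Matroid α := M.restrict (M.E \ D)

/-- Contraction of a set of elements. -/
def contract (M : Matroid α) (C : Set α) : Matroid α := (delete M✶ C)✶

/-- `N` is a minor of `M`. -/
def IsMinorOf (N M : Matroid α) : Prop := ∃ C D : Set α, N = delete (contract M C) D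

/-- `M` is (isomorphic to) the uniform matroid `U_{r,n}`. -/
def IsUniform (r n : ℕ) {β : Type*} (M : Matroid β) : Prop :=
  M.E.encard = n ∧ ∀ I ⊆ M.E, (M.Indep I ↔ I.encard ≤ (r : ℕ∞))

/-- A simple matroid: every set of at most two elements of the ground set is independent. -/
def IsSimple (M : Matroid α) : Prop := ∀ X ⊆ M.E, X.encard ≤ 2 → M.Indep X

lemma eRk_eq_matroid_eRk (M : Matroid α) (X : Set α) : eRk M X = M.eRk X := by
  refine le_antisymm (iSup₂_le fun I hI => hI.1.encard_le_eRk_of_subset hI.2) ?_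
  obtain ⟨I, hI⟩ := M.exists_isBasis' X
  rw [← hI.encard_eq_eRk]
  exact le_iSup₂_of_le I ⟨hI.indep, hI.subset⟩ le_rfl

lemma circuit_iff_isCircuit {M : Matroid α} {C : Set α} : Circuit M C ↔ M.IsCircuit C := by
  rw [Matroid.isCircuit_iff_forall_ssubset, Circuit]
  refine and_congr_right fun hC => forall₂_congr fun I hIC => ?_
  exact Matroid.not_dep_iff (hIC.subset.trans hC.subset_ground)

lemma doubleCircuit_iff {M : Matroid α} {D : Set α} : DoubleCircuit M D ↔
    D ⊆ M.E ∧ D.Finite ∧ M.eRk D + 2 = D.encard ∧ ∀ d ∈ D, M.eRk (D \ {d}) = M.eRk D := by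
  simp only [DoubleCircuit, eRk_eq_matroid_eRk]

lemma _root_.Matroid.IsCircuit.eRk_union_add_two_le {M : Matroid α} {C₁ C₂ : Set α}
    (h₁ : M.IsCircuit C₁) (h₂ : M.IsCircuit C₂) (hne : C₁ ≠ C₂) :
    M.eRk (C₁ ∪ C₂) + 2 ≤ (C₁ ∪ C₂).encard := by
  have hI : M.Indep (C₁ ∩ C₂) := h₁.ssubset_indep <| inter_subset_left.ssubset_of_ne
    fun h => hne (h₁.eq_of_subset_isCircuit h₂ (h ▸ inter_subset_right))
  obtain htop | hfin := eq_or_ne (C₁ ∩ C₂).encard ⊤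
  · rw [encard_eq_top_iff.mpr ((encard_eq_top_iff.mp htop).mono
      (inter_subset_left.trans subset_union_left))]
    exact le_top
  rw [← ENat.add_le_add_iff_right hfin, encard_union_add_encard_inter]
  calc M.eRk (C₁ ∪ C₂) + 2 + (C₁ ∩ C₂).encard
      = M.eRk (C₁ ∩ C₂) + M.eRk (C₁ ∪ C₂) + 1 + 1 := by rw [hI.eRk_eq_encard]; ring
    _ ≤ M.eRk C₁ + M.eRk C₂ + 1 + 1 := by grw [M.eRk_inter_add_eRk_union_le C₁ C₂]
    _ = C₁.encard + C₂.encard := by rw [← h₁.eRk_add_one_eq, ← h₂.eRk_add_one_eq]; ring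

namespace DoubleCircuit

variable {M : Matroid α} {D : Set α}

lemma eRk_ne_top (hD : DoubleCircuit M D) : M.eRk D ≠ ⊤ :=
  ((M.eRk_le_encard D).trans_lt (doubleCircuit_iff.mp hD).2.1.encard_lt_top).ne

lemma dep_sdiff_singleton (hD : DoubleCircuit M D) {d : α} (hd : d ∈ D) : M.Dep (D \ {d}) := by
  obtain ⟨hDE, -, hrk, hdel⟩ := doubleCircuit_iff.mp hD
  refine (Matroid.not_indep_iff (sdiff_subset.trans hDE)).mp fun hI => ?_
  have : M.eRk D + 2 = M.eRk D + 1 :=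
    calc M.eRk D + 2 = (D \ {d}).encard + 1 := by rw [hrk, encard_sdiff_singleton_add_one hd]
      _ = M.eRk D + 1 := by rw [← hI.eRk_eq_encard, hdel d hd]
  exact absurd ((ENat.add_le_add_iff_left hD.eRk_ne_top).mp this.le) (by norm_num)

lemma not_isCircuit (hD : DoubleCircuit M D) : ¬ M.IsCircuit D := by
  intro hC
  obtain ⟨d, hd⟩ := hC.nonempty
  exact (hD.dep_sdiff_singleton hd).not_indep (hC.ssubset_indep (sdiff_singleton_ssubset.mpr hd))

lemma exists_isCircuit_notMem (hD : DoubleCircuit M D) {d : α} (hd : d ∈ D) :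
    ∃ C, M.IsCircuit C ∧ C ⊆ D ∧ d ∉ C := by
  obtain ⟨C, hCD, hC⟩ := (hD.dep_sdiff_singleton hd).exists_isCircuit_subset
  exact ⟨C, hC, hCD.trans sdiff_subset, fun h => (hCD h).2 rfl⟩

lemma disjoint_sdiff_of_isCircuit (hD : DoubleCircuit M D) {C₁ C₂ : Set α}
    (h₁ : M.IsCircuit C₁) (h₂ : M.IsCircuit C₂) (h₁D : C₁ ⊆ D) (h₂D : C₂ ⊆ D) (hne : C₁ ≠ C₂) :
    Disjoint (D \ C₁) (D \ C₂) := by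
  obtain ⟨-, -, hrk, hdel⟩ := doubleCircuit_iff.mp hD
  rw [disjoint_left]
  rintro d ⟨hd, hd₁⟩ ⟨-, hd₂⟩
  have hsub : C₁ ∪ C₂ ⊆ D \ {d} :=
    subset_sdiff_singleton (union_subset h₁D h₂D) (not_or.mpr ⟨hd₁, hd₂⟩)
  have : M.eRk D + 3 ≤ M.eRk D + 2 :=
    calc M.eRk D + 3 = M.eRk (D \ {d}) + 2 + 1 := by rw [hdel d hd]; ring
      _ ≤ M.eRk (C₁ ∪ C₂) + ((D \ {d}) \ (C₁ ∪ C₂)).encard + 2 + 1 := by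
        grw [← M.eRk_union_le_eRk_add_encard, union_sdiff_cancel hsub]
      _ = M.eRk (C₁ ∪ C₂) + 2 + ((D \ {d}) \ (C₁ ∪ C₂)).encard + 1 := by ring
      _ ≤ (C₁ ∪ C₂).encard + ((D \ {d}) \ (C₁ ∪ C₂)).encard + 1 := by
        grw [h₁.eRk_union_add_two_le h₂ hne]
      _ = M.eRk D + 2 := by
        rw [add_comm (C₁ ∪ C₂).encard, encard_sdiff_add_encard_of_subset hsub,
          encard_sdiff_singleton_add_one hd, hrk]
  exact absurd ((ENat.add_le_add_iff_left hD.eRk_ne_top).mp this) (by norm_num)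

end DoubleCircuit

/-- Every double circuit of a matroid has a circuit partition: a partition
`(D₁, …, D_k)` of `D` such that the circuits of `M` contained in `D` are exactly the sets
`D \ D_i`. -/
theorem doubleCircuit_exists_circuitPartition {α : Type*} (M : Matroid α) (D : Set α)
    (hD : DoubleCircuit M D) :
    ∃ (k : ℕ) (f : Fin k → Set α), CircuitPartition M D f := by
  have hfin : {C | M.IsCircuit C ∧ C ⊆ D}.Finite :=
    (doubleCircuit_iff.mp hD).2.1.finite_subsets.subset fun _ hC => hC.2
  obtain ⟨k, c, hc_inj, hc_range⟩ := hfin.fin_param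
  have hc (i : Fin k) : M.IsCircuit (c i) ∧ c i ⊆ D := hc_range.subset (mem_range_self i)
  refine ⟨k, fun i => D \ c i, fun i => ?_, fun i j hij => ?_, ?_, fun C => ?_⟩
  · exact sdiff_nonempty.mpr fun hDC => hD.not_isCircuit ((hc i).2.antisymm hDC ▸ (hc i).1)
  · exact hD.disjoint_sdiff_of_isCircuit (hc i).1 (hc j).1 (hc i).2 (hc j).2 (hc_inj.ne hij)
  · refine subset_antisymm (iUnion_subset fun i => sdiff_subset) fun d hd => ?_
    obtain ⟨C, hC, hCD, hdC⟩ := hD.exists_isCircuit_notMem hd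
    obtain ⟨i, rfl⟩ : C ∈ range c := hc_range ▸ ⟨hC, hCD⟩
    exact mem_iUnion.mpr ⟨i, hd, hdC⟩
  · rw [circuit_iff_isCircuit]
    change C ∈ {C | M.IsCircuit C ∧ C ⊆ D} ↔ _
    rw [← hc_range]
    exact exists_congr fun i => by rw [sdiff_sdiff_cancel_left (hc i).2, eq_comm]

end Paper
end

section
/- For every graph G, the bicircular matroid B(G) is a matroid: the collection of edge sets I such that every connected component of the subgraph induced by I contains at most one cycle satisfies the independence axioms of a matroid. -/
open Set

namespace Paper

/-! ### Matroid notions -/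

variable {α : Type*}

/-!
Write `exc S = |S| - |V(S)|` for finite edge sets. An edge set `I` satisfies the bicircular
condition iff it is sparse: `exc S ≤ 0` for every finite `S ⊆ I`. Extending `T` along a walk
that starts in `V(T)` never lowers `exc`, and returning to `V(T)` through a new edge raises it;
so a cycle has `exc ≥ 0`, and two different cycles joined by a walk span a set of excess `1`.
Conversely, a minimal set of positive excess is connected and contains a cycle `C` (in a set of
nonnegative excess a longest path closes up) and, after deleting an edge of `C`, a second cycle.
Sparse sets form a matroid because `exc` is supermodular, so the subsets of excess `0` of a
sparse set are closed under union.
-/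

theorem _root_.List.Nodup.ncard_setOf_mem {α : Type*} {l : List α} (h : l.Nodup) :
    {x | x ∈ l}.ncard = l.length := by
  classical
  rw [show {x | x ∈ l} = (l.toFinset : Set α) by ext; simp, Set.ncard_coe_finset,
    List.toFinset_card_of_nodup h]

theorem _root_.Set.Finite.exists_subset_minimal {α : Type*} {S : Set α} {P : Set α → Prop}
    (hS : S.Finite) (hP : P S) : ∃ T ⊆ S, Minimal P T := by
  obtain ⟨T, hTS, ⟨-, hT⟩, hmin⟩ :=
    (hS.finite_subsets.subset (sep_subset _ P)).exists_le_minimal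
      (show S ∈ {T ∈ {T | T ⊆ S} | P T} from ⟨Subset.rfl, hP⟩)
  exact ⟨T, hTS, hT, fun T' hT' hT'T ↦ hmin ⟨hT'T.trans hTS, hT'⟩ hT'T⟩

namespace Multigraph

variable {V E : Type*} {G : Multigraph V E} {I J S T C C₁ C₂ : Set E} {u v w x y : V}
  {e f : E} {es : List E} {vs : List V}

theorem IsWalk.length_eq (h : G.IsWalk I u es vs) : es.length = vs.length := by
  induction h with
  | nil => rfl
  | cons _ _ _ ih => simp [ih]

theorem IsWalk.edges_subset (h : G.IsWalk I u es vs) : {e | e ∈ es} ⊆ I := by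
  induction h with
  | nil => simp
  | cons he _ _ ih =>
    intro f hf
    rcases List.mem_cons.1 hf with rfl | hf
    exacts [he, ih hf]

theorem IsWalk.mono (h : G.IsWalk I u es vs) (hIJ : I ⊆ J) : G.IsWalk J u es vs := by
  induction h with
  | nil => exact .nil _
  | cons he hinc _ ih => exact .cons (hIJ he) hinc ih

theorem IsWalk.mem_of_mem_inc (h : G.IsWalk I u es vs) (he : e ∈ es) (hx : x ∈ G.inc e) :
    x ∈ u :: vs := by
  induction h with
  | nil => simp at he
  | cons _ hinc _ ih =>
    rcases List.mem_cons.1 he with rfl | he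
    · rw [hinc, Sym2.mem_iff] at hx
      rcases hx with rfl | rfl <;> simp
    · exact List.mem_cons_of_mem _ (ih he)

theorem IsWalk.mem_verts (h : G.IsWalk I u es vs) (hx : x ∈ vs) :
    x ∈ G.verts {e | e ∈ es} := by
  induction h with
  | nil => simp at hx
  | @cons u v e es vs _ hinc _ ih =>
    rcases List.mem_cons.1 hx with rfl | hx
    · exact ⟨e, List.mem_cons_self, by simp [hinc]⟩
    · obtain ⟨f, hf, hxf⟩ := ih hx
      exact ⟨f, List.mem_cons_of_mem _ hf, hxf⟩

theorem IsWalkFrom.nil (u : V) : G.IsWalkFrom I u [] [] u := ⟨.nil u, rfl⟩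

theorem IsWalkFrom.cons (he : e ∈ I) (hinc : G.inc e = s(u, v))
    (h : G.IsWalkFrom I v es vs w) : G.IsWalkFrom I u (e :: es) (v :: vs) w :=
  ⟨.cons he hinc h.1, by rw [List.getLast_cons (List.cons_ne_nil _ _)]; exact h.2⟩

@[elab_as_elim]
theorem IsWalkFrom.induction_on
    {motive : ∀ u es vs w, G.IsWalkFrom I u es vs w → Prop}
    (nil : ∀ u, motive u [] [] u (.nil u))
    (cons : ∀ {u v w e es vs} (he : e ∈ I) (hinc : G.inc e = s(u, v))
      (h : G.IsWalkFrom I v es vs w), motive v es vs w h → motive u (e :: es) (v :: vs) w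
        (.cons he hinc h)) :
    ∀ {u es vs w} (h : G.IsWalkFrom I u es vs w), motive u es vs w h := by
  rintro u es vs w ⟨h, hlast⟩
  induction h generalizing w with
  | nil u => cases hlast; exact nil u
  | cons he hinc htail ih =>
    rw [List.getLast_cons (List.cons_ne_nil _ _)] at hlast
    exact cons he hinc ⟨htail, hlast⟩ (ih hlast)

theorem IsWalkFrom.mono (h : G.IsWalkFrom I u es vs w) (hIJ : I ⊆ J) :
    G.IsWalkFrom J u es vs w :=
  ⟨h.1.mono hIJ, h.2⟩

theorem IsWalkFrom.end_mem (h : G.IsWalkFrom I u es vs w) : w ∈ u :: vs :=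
  h.2 ▸ List.getLast_mem _

theorem IsWalkFrom.append {es' : List E} {vs' : List V} (h : G.IsWalkFrom I u es vs v)
    (h' : G.IsWalkFrom I v es' vs' w) : G.IsWalkFrom I u (es ++ es') (vs ++ vs') w := by
  induction h using IsWalkFrom.induction_on with
  | nil => exact h'
  | cons he hinc _ ih => exact .cons he hinc (ih h')

theorem IsWalkFrom.split (h : G.IsWalkFrom I u es vs w) (hx : x ∈ vs) :
    ∃ es₁ es₂ vs₁ vs₂, es = es₁ ++ es₂ ∧ vs = vs₁ ++ vs₂ ∧
      G.IsWalkFrom I u es₁ vs₁ x ∧ G.IsWalkFrom I x es₂ vs₂ w := by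
  induction h using IsWalkFrom.induction_on with
  | nil => simp at hx
  | @cons u v w e es vs he hinc htail ih =>
    rcases List.mem_cons.1 hx with rfl | hx
    · exact ⟨[e], es, [x], vs, rfl, rfl, .cons he hinc (.nil x), htail⟩
    · obtain ⟨es₁, es₂, vs₁, vs₂, rfl, rfl, h₁, h₂⟩ := ih hx
      exact ⟨e :: es₁, es₂, v :: vs₁, vs₂, rfl, rfl, .cons he hinc h₁, h₂⟩

theorem Reachable.refl (u : V) : G.Reachable I u u := ⟨[], [], .nil u⟩

theorem Reachable.trans (h : G.Reachable I u v) (h' : G.Reachable I v w) :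
    G.Reachable I u w := by
  obtain ⟨es, vs, h⟩ := h
  obtain ⟨es', vs', h'⟩ := h'
  exact ⟨_, _, h.append h'⟩

theorem Reachable.mono (h : G.Reachable I u v) (hIJ : I ⊆ J) : G.Reachable J u v := by
  obtain ⟨es, vs, h⟩ := h
  exact ⟨es, vs, h.mono hIJ⟩

theorem Reachable.of_mem_inc (he : e ∈ I) (hu : u ∈ G.inc e) (hv : v ∈ G.inc e) :
    G.Reachable I u v := by
  obtain ⟨y, hy⟩ := Sym2.mem_iff_exists.1 hu
  rw [hy, Sym2.mem_iff] at hv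
  rcases hv with rfl | rfl
  exacts [.refl v, ⟨[e], [v], .cons he hy (.nil v)⟩]

theorem Reachable.symm (h : G.Reachable I u v) : G.Reachable I v u := by
  obtain ⟨es, vs, h⟩ := h
  induction h using IsWalkFrom.induction_on with
  | nil => exact .refl _
  | cons he hinc _ ih => exact ih.trans (.of_mem_inc he (by simp [hinc]) (by simp [hinc]))

theorem verts_mono (h : S ⊆ T) : G.verts S ⊆ G.verts T :=
  fun _ ⟨e, he, hx⟩ ↦ ⟨e, h he, hx⟩

theorem verts_union : G.verts (S ∪ T) = G.verts S ∪ G.verts T := by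
  ext
  simp [verts, or_and_right, exists_or]

theorem verts_insert : G.verts (insert e S) = {x | x ∈ G.inc e} ∪ G.verts S := by
  ext
  simp [verts]

theorem verts_inter_subset : G.verts (S ∩ T) ⊆ G.verts S ∩ G.verts T :=
  subset_inter (verts_mono inter_subset_left) (verts_mono inter_subset_right)

theorem verts_finite (hS : S.Finite) : (G.verts S).Finite := by
  have : G.verts S = ⋃ e ∈ S, {x | x ∈ G.inc e} := by ext; simp [verts]
  refine this ▸ hS.biUnion fun e _ ↦ ?_
  induction G.inc e using Sym2.ind with
  | _ a b => exact (toFinite {a, b}).subset fun x hx ↦ by simpa using hx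

/-- `|S| - |V(S)|`, meaningful only for finite `S` (`ncard` of an infinite set is `0`). -/
noncomputable def excess (G : Multigraph V E) (S : Set E) : ℤ := S.ncard - (G.verts S).ncard

theorem excess_le_excess_insert (hT : T.Finite) (hx : x ∈ G.inc e) (hxT : x ∈ G.verts T) :
    G.excess T ≤ G.excess (insert e T) := by
  by_cases he : e ∈ T
  · rw [insert_eq_of_mem he]
  obtain ⟨y, hy⟩ := Sym2.mem_iff_exists.1 hx
  have hsub : G.verts (insert e T) ⊆ insert y (G.verts T) := by
    rw [verts_insert, hy]
    rintro z (hz | hz)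
    · rcases Sym2.mem_iff.1 hz with rfl | rfl
      exacts [mem_insert_of_mem _ hxT, mem_insert _ _]
    · exact mem_insert_of_mem _ hz
  have hle := (ncard_le_ncard hsub ((verts_finite hT).insert y)).trans (ncard_insert_le _ _)
  unfold excess
  rw [ncard_insert_of_notMem he hT]
  push_cast
  omega

theorem excess_insert_eq (hT : T.Finite) (he : e ∉ T)
    (hinc : ∀ x ∈ G.inc e, x ∈ G.verts T) : G.excess (insert e T) = G.excess T + 1 := by
  have hV : G.verts (insert e T) = G.verts T := by
    rw [verts_insert]
    exact union_eq_self_of_subset_left hinc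
  unfold excess
  rw [hV, ncard_insert_of_notMem he hT]
  push_cast
  ring

theorem excess_add_excess_le (hS : S.Finite) (hT : T.Finite) :
    G.excess S + G.excess T ≤ G.excess (S ∪ T) + G.excess (S ∩ T) := by
  have hE := ncard_union_add_ncard_inter S T hS hT
  have hV := ncard_union_add_ncard_inter _ _ (verts_finite (G := G) hS) (verts_finite (G := G) hT)
  have hVi := ncard_le_ncard (verts_inter_subset (G := G) (S := S) (T := T))
    ((verts_finite hS).inter_of_left _)
  unfold excess
  rw [verts_union]
  omega

theorem IsWalk.excess_le_excess_union (h : G.IsWalk I u es vs) (hT : T.Finite)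
    (hu : u ∈ G.verts T) : G.excess T ≤ G.excess (T ∪ {e | e ∈ es}) := by
  induction h generalizing T with
  | nil => simp
  | @cons u v e es vs _ hinc _ ih =>
    have hstep := excess_le_excess_insert hT (show u ∈ G.inc e by simp [hinc]) hu
    have hrest := ih (hT.insert e) ⟨e, mem_insert _ _, by simp [hinc]⟩
    rw [show T ∪ {f | f ∈ e :: es} = insert e T ∪ {f | f ∈ es} by ext; simp; tauto]
    exact hstep.trans hrest

theorem IsWalkFrom.start_mem_verts_or_eq (h : G.IsWalkFrom I u es vs w) :
    u ∈ G.verts {e | e ∈ es} ∨ u = w := by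
  induction h using IsWalkFrom.induction_on with
  | nil => exact .inr rfl
  | @cons _ _ _ e _ _ _ hinc => exact .inl ⟨e, List.mem_cons_self, by simp [hinc]⟩

/-- The last edge of the walk outside `T` has both ends in the vertex set built so far. -/
theorem IsWalkFrom.excess_add_one_le (h : G.IsWalkFrom I u es vs w) (hT : T.Finite)
    (hu : u ∈ G.verts T) (hw : w ∈ G.verts T) (hnd : es.Nodup)
    (hnew : ¬ {e | e ∈ es} ⊆ T) : G.excess T + 1 ≤ G.excess (T ∪ {e | e ∈ es}) := by
  induction h using IsWalkFrom.induction_on generalizing T with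
  | nil => simp at hnew
  | @cons u v w e es vs _ hinc htail ih =>
    rw [List.nodup_cons] at hnd
    have hunion : T ∪ {f | f ∈ e :: es} = insert e T ∪ {f | f ∈ es} := by
      ext
      simp only [mem_union, mem_insert_iff, mem_ofPred_eq, List.mem_cons]
      tauto
    by_cases hes : {f | f ∈ es} ⊆ T
    · have heT : e ∉ T := fun heT ↦ hnew fun f hf ↦ by
        rcases List.mem_cons.1 hf with rfl | hf
        exacts [heT, hes hf]
      have hv : v ∈ G.verts T := by
        rcases htail.start_mem_verts_or_eq with hv | rfl
        exacts [verts_mono hes hv, hw]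
      rw [hunion, union_eq_self_of_subset_right (hes.trans (subset_insert _ _)),
        excess_insert_eq hT heT ?_]
      rw [hinc]
      rintro x hx
      rcases Sym2.mem_iff.1 hx with rfl | rfl
      exacts [hu, hv]
    · have hes' : ¬ {f | f ∈ es} ⊆ insert e T := fun hsub ↦ hes fun f hf ↦
        (hsub hf).resolve_left fun hfe ↦ hnd.1 (hfe ▸ hf)
      have hstep := excess_le_excess_insert hT (show u ∈ G.inc e by simp [hinc]) hu
      have hrest := ih (hT.insert e) ⟨e, mem_insert _ _, by simp [hinc]⟩
        (verts_mono (subset_insert _ _) hw) hnd.2 hes'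
      rw [hunion]
      linarith

theorem IsCycleIn.mono (hC : G.IsCycleIn I C) (hIJ : I ⊆ J) : G.IsCycleIn J C := by
  obtain ⟨v, es, vs, ⟨hw, hc⟩, rfl⟩ := hC
  exact ⟨v, es, vs, ⟨hw.mono hIJ, hc⟩, rfl⟩

theorem IsCycleIn.subset (hC : G.IsCycleIn I C) : C ⊆ I := by
  obtain ⟨v, es, vs, hc, rfl⟩ := hC
  exact hc.1.1.edges_subset

theorem IsCycleIn.finite (hC : G.IsCycleIn I C) : C.Finite := by
  obtain ⟨v, es, vs, -, rfl⟩ := hC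
  exact List.finite_toSet es

theorem IsCycleIn.nonempty (hC : G.IsCycleIn I C) : C.Nonempty := by
  obtain ⟨v, es, vs, ⟨-, hne, -⟩, rfl⟩ := hC
  exact List.exists_mem_of_ne_nil es hne

theorem IsCycle.start_mem (h : G.IsCycle I v es vs) : v ∈ vs := by
  obtain ⟨⟨hw, hlast⟩, hne, -, -⟩ := h
  have hvs : vs ≠ [] := by
    rintro rfl
    exact hne (List.eq_nil_of_length_eq_zero hw.length_eq)
  rw [List.getLast_cons hvs] at hlast
  exact hlast ▸ List.getLast_mem hvs

theorem IsCycle.verts_subset (h : G.IsCycle I v es vs) :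
    G.verts {e | e ∈ es} ⊆ {x | x ∈ vs} := by
  rintro x ⟨e, he, hx⟩
  rcases List.mem_cons.1 (h.1.1.mem_of_mem_inc he hx) with rfl | hx
  exacts [h.start_mem, hx]

theorem IsCycleIn.excess_nonneg (hC : G.IsCycleIn I C) : 0 ≤ G.excess C := by
  obtain ⟨v, es, vs, hc, rfl⟩ := hC
  have hle := ncard_le_ncard hc.verts_subset (List.finite_toSet vs)
  rw [hc.2.2.2.ncard_setOf_mem, ← hc.1.1.length_eq, ← hc.2.2.1.ncard_setOf_mem] at hle
  unfold excess
  omega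

theorem IsCycleIn.exists_isCycle_of_mem_verts (hC : G.IsCycleIn I C) (hx : x ∈ G.verts C) :
    ∃ es vs, G.IsCycle I x es vs ∧ C = {e | e ∈ es} := by
  obtain ⟨v, es, vs, hc, rfl⟩ := hC
  have hxvs : x ∈ vs := hc.verts_subset hx
  obtain ⟨hw, hne, hnd, hvnd⟩ := hc
  obtain ⟨es₁, es₂, vs₁, vs₂, rfl, rfl, h₁, h₂⟩ := hw.split hxvs
  refine ⟨es₂ ++ es₁, vs₂ ++ vs₁, ⟨h₂.append h₁, by simpa [and_comm] using hne,
    List.nodup_append_comm.1 hnd, List.nodup_append_comm.1 hvnd⟩, ?_⟩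
  ext
  simp [or_comm]

theorem IsCycleIn.excess_add_one_le (hC : G.IsCycleIn I C) (hT : T.Finite)
    (hx : x ∈ G.verts C) (hxT : x ∈ G.verts T) (hCT : ¬ C ⊆ T) :
    G.excess T + 1 ≤ G.excess (T ∪ C) := by
  obtain ⟨es, vs, hc, rfl⟩ := hC.exists_isCycle_of_mem_verts hx
  exact hc.1.excess_add_one_le hT hxT hxT hc.2.2.1 hCT

theorem IsWalkFrom.end_mem_verts_union (h : G.IsWalkFrom I u es vs w) (hu : u ∈ G.verts T) :
    w ∈ G.verts (T ∪ {e | e ∈ es}) := by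
  rw [verts_union]
  rcases List.mem_cons.1 h.end_mem with rfl | hw
  exacts [.inl hu, .inr (h.1.mem_verts hw)]

theorem Reachable.exists_reachable_sdiff (h : G.Reachable I u w) (hw : w ∈ G.verts C) :
    ∃ y ∈ G.verts C, G.Reachable (I \ C) u y := by
  obtain ⟨es, vs, h⟩ := h
  induction h using IsWalkFrom.induction_on with
  | nil u => exact ⟨u, hw, .refl u⟩
  | @cons u v w e es vs he hinc _ ih =>
    by_cases hu : u ∈ G.verts C
    · exact ⟨u, hu, .refl u⟩
    obtain ⟨y, hy, es', vs', hwalk⟩ := ih hw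
    have heC : e ∉ C := fun heC ↦ hu ⟨e, heC, by simp [hinc]⟩
    exact ⟨y, hy, _, _, .cons ⟨he, heC⟩ hinc hwalk⟩

def IsSparse (G : Multigraph V E) (I : Set E) : Prop :=
  ∀ S ⊆ I, S.Finite → G.excess S ≤ 0

/-- Otherwise a walk from `C₁` to the first vertex of `C₂` it meets, followed by `C₂`,
adds a cycle to `C₁` and raises the excess to `1`. -/
theorem IsSparse.subset_of_reachable (hI : G.IsSparse I) (hC₁ : G.IsCycleIn I C₁)
    (hC₂ : G.IsCycleIn I C₂) (hu : u ∈ G.verts C₁) (hw : w ∈ G.verts C₂)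
    (hr : G.Reachable I u w) : C₂ ⊆ C₁ := by
  by_contra hC
  obtain ⟨y, hy, es, vs, hP⟩ := hr.exists_reachable_sdiff hw
  have hPI := hP.1.edges_subset
  set T := C₁ ∪ {e | e ∈ es}
  have hT : T.Finite := hC₁.finite.union (List.finite_toSet es)
  have hT0 : 0 ≤ G.excess T :=
    hC₁.excess_nonneg.trans (hP.1.excess_le_excess_union hC₁.finite hu)
  have hC₂T : ¬ C₂ ⊆ T := fun hsub ↦ hC fun f hf ↦
    (hsub hf).resolve_right fun hfP ↦ (hPI hfP).2 hf
  have hT1 := hC₂.excess_add_one_le hT hy (hP.end_mem_verts_union hu) hC₂T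
  have hsparse := hI (T ∪ C₂)
    (union_subset (union_subset hC₁.subset (hPI.trans sdiff_subset)) hC₂.subset)
    (hT.union hC₂.finite)
  omega

theorem IsSparse.bicircIndep (hI : G.IsSparse I) : G.BicircIndep I := by
  rintro C₁ C₂ hC₁ hC₂ ⟨u, w, hu, hw, hr⟩
  exact (hI.subset_of_reachable hC₂ hC₁ hw hu hr.symm).antisymm
    (hI.subset_of_reachable hC₁ hC₂ hu hw hr)

theorem verts_nonempty (hS : S.Nonempty) : (G.verts S).Nonempty :=
  let ⟨e, he⟩ := hS; ⟨_, e, he, Sym2.out_fst_mem _⟩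

theorem excess_union_of_disjoint (hS : S.Finite) (hT : T.Finite)
    (h : Disjoint (G.verts S) (G.verts T)) : G.excess (S ∪ T) = G.excess S + G.excess T := by
  have hST : Disjoint S T := disjoint_left.2 fun e heS heT ↦
    disjoint_left.1 h ⟨e, heS, Sym2.out_fst_mem _⟩ ⟨e, heT, Sym2.out_fst_mem _⟩
  unfold excess
  rw [ncard_union_eq hST hS hT, verts_union,
    ncard_union_eq h (verts_finite hS) (verts_finite hT)]
  push_cast
  ring

theorem excess_sub_one_le_excess_sdiff_singleton (hS : S.Finite) (he : e ∈ S) :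
    G.excess S - 1 ≤ G.excess (S \ {e}) := by
  have hV := ncard_le_ncard (verts_mono (G := G) (sdiff_subset (t := {e}))) (verts_finite hS)
  unfold excess
  rw [← ncard_sdiff_singleton_add_one he hS]
  push_cast
  omega

/-- Otherwise the edges reachable from `x` and the others split `S` into two parts with
disjoint vertex sets, one of which would already have positive excess. -/
theorem reachable_of_minimal_excess_pos (hS : S.Finite) (hmin : Minimal (0 < G.excess ·) S)
    (hx : x ∈ G.verts S) (hy : y ∈ G.verts S) : G.Reachable S x y := by
  set A := {e ∈ S | ∃ a ∈ G.inc e, G.Reachable S x a}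
  have hAS : A ⊆ S := sep_subset _ _
  have hreach : ∀ z ∈ G.verts A, G.Reachable S x z := by
    rintro z ⟨e, ⟨heS, a, ha, hxa⟩, hz⟩
    exact hxa.trans (.of_mem_inc heS ha hz)
  have hdisj : Disjoint (G.verts A) (G.verts (S \ A)) :=
    disjoint_left.2 fun z hzA ⟨f, ⟨hfS, hfA⟩, hzf⟩ ↦ hfA ⟨hfS, z, hzf, hreach z hzA⟩
  have hsplit := excess_union_of_disjoint (hS.subset hAS) (hS.sdiff (t := A)) hdisj
  rw [union_sdiff_cancel hAS] at hsplit
  have hB : ¬ 0 < G.excess (S \ A) := by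
    intro hpos
    obtain ⟨e, heS, hxe⟩ := hx
    exact (hmin.2 hpos sdiff_subset heS).2 ⟨heS, x, hxe, .refl x⟩
  have hA : S ⊆ A := hmin.2 (by have := hmin.1; omega) hAS
  obtain ⟨f, hfS, hyf⟩ := hy
  exact hreach y ⟨f, hA hfS, hyf⟩

theorem isCycleIn_singleton (he : e ∈ I) (hinc : G.inc e = s(x, x)) : G.IsCycleIn I {e} :=
  ⟨x, [e], [x], ⟨.cons he hinc (.nil x), List.cons_ne_nil _ _, List.nodup_singleton _,
    List.nodup_singleton _⟩, by ext; simp⟩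

theorem isCycleIn_singleton_of_excess_nonneg (he : e ∈ I) (h : 0 ≤ G.excess {e}) :
    G.IsCycleIn I {e} := by
  obtain ⟨b, hb⟩ := Sym2.mem_iff_exists.1 (Sym2.out_fst_mem (G.inc e))
  generalize (G.inc e).out.1 = a at hb
  by_cases hab : a = b
  · exact isCycleIn_singleton he (hab ▸ hb)
  · have hV : G.verts {e} = {a, b} := by ext; simp [verts, hb]
    simp [excess, hV, ncard_pair hab] at h

theorem IsWalk.edges_nodup (h : G.IsWalk I u es vs) (hnd : (u :: vs).Nodup) : es.Nodup := by
  induction h with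
  | nil => exact List.nodup_nil
  | cons _ hinc htail ih =>
    rw [List.nodup_cons] at hnd
    exact List.nodup_cons.2
      ⟨fun he ↦ hnd.1 (htail.mem_of_mem_inc he (by simp [hinc])), ih hnd.2⟩

theorem IsWalk.exists_isCycleIn (h : G.IsWalk I u es vs) (hnd : (u :: vs).Nodup) (hf : f ∈ I)
    (hfes : f ∉ es) (hinc : G.inc f = s(y, u)) (hy : y ∈ u :: vs) : ∃ C, G.IsCycleIn I C := by
  rcases List.mem_cons.1 hy with rfl | hy
  · exact ⟨_, isCycleIn_singleton hf hinc⟩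
  obtain ⟨es₁, es₂, vs₁, vs₂, rfl, rfl, h₁, -⟩ := IsWalkFrom.split ⟨h, rfl⟩ hy
  refine ⟨_, y, f :: es₁, u :: vs₁,
    ⟨.cons hf hinc h₁, List.cons_ne_nil _ _, ?_, ?_⟩, rfl⟩
  · exact List.nodup_cons.2 ⟨fun hf ↦ hfes (List.mem_append_left _ hf),
      (h.edges_nodup hnd).of_append_left⟩
  · exact hnd.sublist ((List.sublist_append_left vs₁ vs₂).cons_cons u)

theorem IsWalk.exists_inc_notMem (hdeg : ∀ e ∈ T, G.verts T ⊆ G.verts (T \ {e}))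
    (h : G.IsWalk T u es vs) (hnd : (u :: vs).Nodup) (hu : u ∈ G.verts T) :
    ∃ f ∈ T, u ∈ G.inc f ∧ f ∉ es := by
  cases h with
  | nil =>
    obtain ⟨f, hf, huf⟩ := hu
    exact ⟨f, hf, huf, List.not_mem_nil⟩
  | cons he _ htail =>
    obtain ⟨f, ⟨hfT, hfe⟩, huf⟩ := hdeg _ he hu
    refine ⟨f, hfT, huf, fun hf ↦ ?_⟩
    rcases List.mem_cons.1 hf with rfl | hf
    · exact hfe rfl
    · exact (List.nodup_cons.1 hnd).1 (htail.mem_of_mem_inc hf huf)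

/-- Without a cycle every path could be prolonged at its start, but a path in `T` has at most
`|V(T)|` edges. -/
theorem exists_isCycleIn_of_forall_verts_subset (hT : T.Finite) (hne : T.Nonempty)
    (hdeg : ∀ e ∈ T, G.verts T ⊆ G.verts (T \ {e})) : ∃ C, G.IsCycleIn T C := by
  by_contra hno
  have hpath : ∀ n, ∃ u es vs, u ∈ G.verts T ∧ G.IsWalk T u es vs ∧ (u :: vs).Nodup ∧
      es.length = n := by
    intro n
    induction n with
    | zero =>
      obtain ⟨u, hu⟩ := verts_nonempty (G := G) hne
      exact ⟨u, [], [], hu, .nil u, List.nodup_singleton u, rfl⟩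
    | succ n ih =>
      obtain ⟨u, es, vs, hu, hw, hnd, rfl⟩ := ih
      obtain ⟨f, hfT, huf, hfes⟩ := hw.exists_inc_notMem hdeg hnd hu
      obtain ⟨y, hy⟩ := Sym2.mem_iff_exists.1 huf
      have hinc : G.inc f = s(y, u) := hy.trans Sym2.eq_swap
      have hyp : y ∉ u :: vs := fun hyp ↦ hno (hw.exists_isCycleIn hnd hfT hfes hinc hyp)
      exact ⟨y, f :: es, u :: vs, ⟨f, hfT, by simp [hinc]⟩, .cons hfT hinc hw,
        List.nodup_cons.2 ⟨hyp, hnd⟩, rfl⟩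
  obtain ⟨u, es, vs, -, hw, hnd, hlen⟩ := hpath ((G.verts T).ncard + 1)
  have hle := ncard_le_ncard (s := {x | x ∈ vs})
    (fun x hx ↦ verts_mono hw.edges_subset (hw.mem_verts hx)) (verts_finite (G := G) hT)
  rw [(List.nodup_cons.1 hnd).2.ncard_setOf_mem, ← hw.length_eq, hlen] at hle
  omega

/-- In a minimal nonempty subset of nonnegative excess, deleting an edge never loses a
vertex, unless the subset is a single loop. -/
theorem exists_isCycleIn_of_excess_nonneg (hT : T.Finite) (hne : T.Nonempty)
    (h : 0 ≤ G.excess T) : ∃ C, G.IsCycleIn T C := by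
  obtain ⟨S, hST, ⟨hSne, hS0⟩, hmin⟩ :=
    hT.exists_subset_minimal (P := fun S ↦ S.Nonempty ∧ 0 ≤ G.excess S) ⟨hne, h⟩
  have hS := hT.subset hST
  suffices ∃ C, G.IsCycleIn S C from this.imp fun _ hC ↦ hC.mono hST
  by_cases hloop : ∃ e ∈ S, S \ {e} = ∅
  · obtain ⟨e, he, hSe⟩ := hloop
    obtain rfl : S = {e} := (sdiff_eq_empty.1 hSe).antisymm (singleton_subset_iff.2 he)
    exact ⟨_, isCycleIn_singleton_of_excess_nonneg rfl hS0⟩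
  push Not at hloop
  refine exists_isCycleIn_of_forall_verts_subset hS hSne fun e he ↦ ?_
  have hneg : G.excess (S \ {e}) < 0 := by
    by_contra! h0
    exact (hmin ⟨hloop e he, h0⟩ sdiff_subset he).2 rfl
  have hcard := ncard_sdiff_singleton_add_one he hS
  refine (eq_of_subset_of_ncard_le (verts_mono sdiff_subset) ?_ (verts_finite hS)).symm.subset
  unfold excess at hneg hS0
  omega

theorem BicircIndep.isSparse (hI : G.BicircIndep I) : G.IsSparse I := by
  intro S hSI hS
  by_contra! hpos
  obtain ⟨S₀, hS₀S, hmin⟩ := hS.exists_subset_minimal (P := (0 < G.excess ·)) hpos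
  have hS₀ := hS.subset hS₀S
  have hS₀I := hS₀S.trans hSI
  have hpos₀ := hmin.1
  have hne : S₀.Nonempty := by
    rw [← ncard_pos hS₀]
    unfold excess at hpos₀
    omega
  obtain ⟨C₁, hC₁⟩ := exists_isCycleIn_of_excess_nonneg hS₀ hne hpos₀.le
  obtain ⟨e, he⟩ := hC₁.nonempty
  have heS₀ := hC₁.subset he
  have hne' : (S₀ \ {e}).Nonempty := by
    have hV := (ncard_pos (verts_finite hS₀)).2 (verts_nonempty (G := G) hne)
    have hcard := ncard_sdiff_singleton_add_one heS₀ hS₀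
    rw [← ncard_pos hS₀.sdiff]
    unfold excess at hpos₀
    omega
  obtain ⟨C₂, hC₂⟩ := exists_isCycleIn_of_excess_nonneg hS₀.sdiff hne'
    (by linarith [excess_sub_one_le_excess_sdiff_singleton (G := G) hS₀ heS₀])
  obtain ⟨u, hu⟩ := verts_nonempty (G := G) hC₁.nonempty
  obtain ⟨w, hw⟩ := verts_nonempty (G := G) hC₂.nonempty
  have hreach := reachable_of_minimal_excess_pos hS₀ hmin (verts_mono hC₁.subset hu)
    (verts_mono (hC₂.subset.trans sdiff_subset) hw)
  have hC : C₁ = C₂ := hI C₁ C₂ (hC₁.mono hS₀I) (hC₂.mono (sdiff_subset.trans hS₀I))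
    ⟨u, w, hu, hw, hreach.mono hS₀I⟩
  exact (hC₂.subset (hC ▸ he)).2 rfl

theorem excess_empty : G.excess ∅ = 0 := by
  simp [excess, verts]

theorem IsSparse.subset (hJ : G.IsSparse J) (hIJ : I ⊆ J) : G.IsSparse I :=
  fun S hSI hS ↦ hJ S (hSI.trans hIJ) hS

theorem isSparse_empty : G.IsSparse ∅ := fun S hS _ ↦ by
  rw [subset_empty_iff.1 hS, excess_empty]

theorem isSparse_of_forall_finite (h : ∀ J ⊆ I, J.Finite → G.IsSparse J) : G.IsSparse I :=
  fun S hSI hS ↦ h S hSI hS S Subset.rfl hS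

theorem IsSparse.exists_excess_eq_zero_of_not_isSparse_insert (hI : G.IsSparse I)
    (h : ¬ G.IsSparse (insert e I)) :
    ∃ A ⊆ I, A.Finite ∧ G.excess A = 0 ∧ ∀ x ∈ G.inc e, x ∈ G.verts A := by
  simp only [IsSparse, not_forall, not_le] at h
  obtain ⟨S, hSI, hS, hpos⟩ := h
  have heS : e ∈ S := by
    by_contra heS
    exact (hI S (fun f hf ↦ (hSI hf).resolve_left (ne_of_mem_of_not_mem hf heS)) hS).not_gt hpos
  have hAI : S \ {e} ⊆ I := fun f ⟨hfS, hfe⟩ ↦ (hSI hfS).resolve_left hfe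
  have hA := hI _ hAI hS.sdiff
  have hcard := ncard_sdiff_singleton_add_one heS hS
  have hVsub : G.verts (S \ {e}) ⊆ G.verts S := verts_mono sdiff_subset
  have hVle := ncard_le_ncard hVsub (verts_finite hS)
  unfold excess at hA hpos
  have hV : G.verts (S \ {e}) = G.verts S :=
    eq_of_subset_of_ncard_le hVsub (by omega) (verts_finite hS)
  exact ⟨S \ {e}, hAI, hS.sdiff, by unfold excess; omega, fun x hx ↦ hV ▸ ⟨e, heS, hx⟩⟩

/-- By supermodularity of `excess`, a maximal `T ⊆ I` of excess `0` contains every such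
subset, so it spans every edge of `J \ I`; the edges of `J` spanned by `T` number at most `|T|`,
which bounds `|J|` by `|I|`. -/
theorem IsSparse.exists_insert_of_ncard_lt (hI : G.IsSparse I) (hIfin : I.Finite)
    (hJ : G.IsSparse J) (hJfin : J.Finite) (hlt : I.ncard < J.ncard) :
    ∃ e ∈ J, e ∉ I ∧ G.IsSparse (insert e I) := by
  by_contra! hcon
  have hfam : {A | A ⊆ I ∧ G.excess A = 0}.Finite :=
    hIfin.finite_subsets.subset fun _ h ↦ h.1
  obtain ⟨T, -, ⟨hTI, hT0⟩, hTmax⟩ :=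
    hfam.exists_le_maximal ⟨empty_subset I, excess_empty⟩
  have hTfin := hIfin.subset hTI
  have hcover : ∀ e ∈ J \ I, ∀ x ∈ G.inc e, x ∈ G.verts T := by
    rintro e ⟨heJ, heI⟩ x hx
    obtain ⟨A, hAI, hA, hA0, hAe⟩ :=
      hI.exists_excess_eq_zero_of_not_isSparse_insert (hcon e heJ heI)
    have hsub := excess_add_excess_le (G := G) hA hTfin
    have hunion := hI _ (union_subset hAI hTI) (hA.union hTfin)
    have hinter := hI _ (inter_subset_left.trans hAI) (hA.inter_of_left T)
    have hAT : A ∪ T ⊆ T := hTmax ⟨union_subset hAI hTI, by omega⟩ subset_union_right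
    exact verts_mono (subset_union_left.trans hAT) (hAe x hx)
  have hVB : G.verts (J \ (I \ T)) ⊆ G.verts T := by
    rintro x ⟨e, ⟨heJ, heIT⟩, hx⟩
    by_cases heI : e ∈ I
    · exact ⟨e, not_not.1 fun heT ↦ heIT ⟨heI, heT⟩, hx⟩
    · exact hcover e ⟨heJ, heI⟩ x hx
  have hB := hJ (J \ (I \ T)) sdiff_subset hJfin.sdiff
  have h₁ := ncard_le_ncard hVB (verts_finite hTfin)
  have h₂ := le_ncard_sdiff (I \ T) J hIfin.sdiff
  have h₃ := ncard_sdiff_add_ncard_of_subset hTI hIfin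
  unfold excess at hB hT0
  omega

noncomputable def bicircularMatroid (G : Multigraph V E) : Matroid E :=
  (IndepMatroid.ofFinitaryCardAugment univ G.IsSparse isSparse_empty
    (fun _ _ hJ hIJ ↦ hJ.subset hIJ)
    (fun _ _ hI hIfin hJ hJfin hlt ↦ hI.exists_insert_of_ncard_lt hIfin hJ hJfin hlt)
    (fun _ h ↦ isSparse_of_forall_finite h) (fun I _ ↦ subset_univ I)).matroid

theorem isBicircularOf_bicircularMatroid : G.IsBicircularOf G.bicircularMatroid :=
  ⟨rfl, fun _ ↦ ⟨IsSparse.bicircIndep, BicircIndep.isSparse⟩⟩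

end Multigraph

/-- For every graph `G`, the bicircular independence condition (each
component of the induced subgraph contains at most one cycle) defines a matroid on `E(G)`. -/
theorem bicircular_exists_matroid {V E : Type*} (G : Multigraph V E) :
    ∃ M : Matroid E, M.E = univ ∧ ∀ I : Set E, M.Indep I ↔ G.BicircIndep I :=
  ⟨G.bicircularMatroid, G.isBicircularOf_bicircularMatroid⟩

end Paper
end
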